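/- Sliding lower bound for the principal-value form on rectangle configurations: Let w ∈ ℝ² be a unit vector, u ∈ ℝ², and a ∈ (0,1]. Let R ⊆ ℝ² be a closed rectangle with side lengths 1 and a whose side of length 1 is parallel to w, let R′ = R − 2w, and let Q ⊆ ℝ² be a measurable set containing {x − t u : x ∈ R, 1 ≤ t ≤ 3}. Then the principal-value limit Λ := lim_{δ→0⁺} ∫_{δ<|t|<1/δ} (∫_{ℝ²} χ_R(x) χ_{R′}(x − t w) χ_Q(x − t u) dx) dt/t exists and Λ ≥ a/3 = |R|/3. -/

import Mathlib

/-!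
In the orthonormal coordinates `(dot2 (x - c) w, dot2 (x - c) (perp w))` the rectangle `R` is
`[0, 1] × [0, a]`, and `x - t w ∈ R′` means that `x` lies in the translate of `R` by `(t - 2) w`.
These two rectangles meet only for `1 ≤ t ≤ 3`, where the hypothesis on `Q` makes the third factor
equal to `1`; so the inner integral is the overlap area `a · max (1 - |t - 2|) 0`. The `t`-integrand
is then supported in `[1, 3]`, the principal value is an ordinary integral, and `1 / t ≥ 1 / 3` on
the support of a tent of total mass `1` gives `Λ ≥ a / 3`.
-/

open MeasureTheory Filter Topology Set

noncomputable section

abbrev V2 : Type := ℝ × ℝ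

def dot2 (x y : V2) : ℝ := x.1 * y.1 + x.2 * y.2

/-- Rotation of a vector of ℝ² by +90 degrees. -/
def perp (u : V2) : V2 := (-u.2, u.1)

/-- The closed rectangle with corner `c`, unit side direction `u` (and `perp u`),
and side lengths `l1` (in direction `u`) and `l2`. -/
def rectSet (c u : V2) (l1 l2 : ℝ) : Set V2 :=
  {x | ∃ s t : ℝ, s ∈ Set.Icc 0 l1 ∧ t ∈ Set.Icc 0 l2 ∧ x = c + s • u + t • perp u}

def rectFrame (w : V2) : V2 →ₗ[ℝ] V2 :=
  (LinearMap.fst ℝ ℝ ℝ).smulRight w + (LinearMap.snd ℝ ℝ ℝ).smulRight (perp w)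

lemma rectFrame_apply (w y : V2) : rectFrame w y = y.1 • w + y.2 • perp w := rfl

lemma det_rectFrame (w : V2) : LinearMap.det (rectFrame w) = dot2 w w := by
  rw [← LinearMap.det_toMatrix (Module.Basis.finTwoProd ℝ), Matrix.det_fin_two]
  simp [LinearMap.toMatrix_apply, rectFrame_apply, perp, dot2]

lemma rectSet_eq_image (c w : V2) (l1 l2 : ℝ) :
    rectSet c w l1 l2 = (c + ·) '' (rectFrame w '' Icc 0 l1 ×ˢ Icc 0 l2) := by
  ext x
  simp only [rectSet, image_image, rectFrame_apply, mem_image, Prod.exists, mem_prod,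
    mem_ofPred_eq, add_assoc]
  exact ⟨fun ⟨s, t, hs, ht, hx⟩ => ⟨s, t, ⟨hs, ht⟩, hx.symm⟩,
    fun ⟨s, t, ⟨hs, ht⟩, hx⟩ => ⟨s, t, hs, ht, hx.symm⟩⟩

lemma measurableSet_rectSet (c u : V2) (l1 l2 : ℝ) : MeasurableSet (rectSet c u l1 l2) := by
  rw [rectSet_eq_image, image_image]
  exact ((isCompact_Icc.prod isCompact_Icc).image (by fun_prop)).isClosed.measurableSet

lemma volume_rectSet (c w : V2) (l1 l2 : ℝ) :
    volume (rectSet c w l1 l2) =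
      ENNReal.ofReal (dot2 w w) * ENNReal.ofReal l1 * ENNReal.ofReal l2 := by
  have hww : 0 ≤ dot2 w w := add_nonneg (mul_self_nonneg _) (mul_self_nonneg _)
  rw [rectSet_eq_image, image_add_left, measure_preimage_add, Measure.addHaar_image_linearMap,
    det_rectFrame, abs_of_nonneg hww, Measure.volume_eq_prod, Measure.prod_prod,
    Real.volume_Icc, Real.volume_Icc, sub_zero, sub_zero, mul_assoc]

lemma measureReal_rectSet {w : V2} (hw : dot2 w w = 1) (c : V2) (l1 l2 : ℝ) :
    volume.real (rectSet c w l1 l2) = max l1 0 * max l2 0 := by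
  rw [measureReal_def, volume_rectSet, hw, ENNReal.ofReal_one, one_mul, ENNReal.toReal_mul,
    ENNReal.toReal_ofReal', ENNReal.toReal_ofReal']

lemma image_sub_rectSet (c u v : V2) (l1 l2 : ℝ) :
    (fun y => y - v) '' rectSet c u l1 l2 = rectSet (c - v) u l1 l2 := by
  ext x
  constructor
  · rintro ⟨y, ⟨s, t, hs, ht, rfl⟩, rfl⟩
    exact ⟨s, t, hs, ht, by rw [sub_add_eq_add_sub, sub_add_eq_add_sub]⟩
  · rintro ⟨s, t, hs, ht, rfl⟩
    exact ⟨c + s • u + t • perp u, ⟨s, t, hs, ht, rfl⟩,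
      by rw [sub_add_eq_add_sub, sub_add_eq_add_sub]⟩

lemma sub_mem_rectSet_iff (c u v x : V2) (l1 l2 : ℝ) :
    x - v ∈ rectSet c u l1 l2 ↔ x ∈ rectSet (c + v) u l1 l2 := by
  refine exists₂_congr fun s t => and_congr_right' <| and_congr_right' ?_
  rw [sub_eq_iff_eq_add, add_right_comm (c + s • u), add_right_comm c]

lemma nonneg_of_mem_rectSet {c u x : V2} {l1 l2 : ℝ} (hx : x ∈ rectSet c u l1 l2) : 0 ≤ l1 := by
  obtain ⟨s, -, hs, -, -⟩ := hx
  exact hs.1.trans hs.2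

lemma dot2_perp_right (w : V2) : dot2 w (perp w) = 0 := by
  simp only [dot2, perp]; ring

lemma dot2_sub_add_smul (x c w v : V2) (r : ℝ) :
    dot2 (x - (c + r • w)) v = dot2 (x - c) v - r * dot2 w v := by
  simp only [dot2, Prod.fst_sub, Prod.snd_sub, Prod.fst_add, Prod.snd_add, Prod.smul_fst,
    Prod.smul_snd, smul_eq_mul]
  ring

lemma mem_rectSet_iff {w : V2} (hw : dot2 w w = 1) (c x : V2) (l1 l2 : ℝ) :
    x ∈ rectSet c w l1 l2 ↔ dot2 (x - c) w ∈ Icc 0 l1 ∧ dot2 (x - c) (perp w) ∈ Icc 0 l2 := by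
  simp only [dot2] at hw
  constructor
  · rintro ⟨s, t, hs, ht, rfl⟩
    convert And.intro hs ht using 2 <;>
      simp only [dot2, perp, Prod.fst_sub, Prod.snd_sub, Prod.fst_add, Prod.snd_add,
        Prod.smul_fst, Prod.smul_snd, smul_eq_mul]
    · linear_combination s * hw
    · linear_combination t * hw
  · rintro ⟨hs, ht⟩
    refine ⟨_, _, hs, ht, Prod.ext ?_ ?_⟩ <;>
      simp only [dot2, perp, Prod.fst_sub, Prod.snd_sub, Prod.fst_add, Prod.snd_add,
        Prod.smul_fst, Prod.smul_snd, smul_eq_mul]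
    · linear_combination (c.1 - x.1) * hw
    · linear_combination (c.2 - x.2) * hw

lemma mem_Icc_and_sub_mem_Icc_iff (s r l : ℝ) :
    s ∈ Icc 0 l ∧ s - r ∈ Icc 0 l ↔ s - max 0 r ∈ Icc 0 (l - |r|) := by
  simp only [mem_Icc]
  rcases le_total 0 r with hr | hr <;>
    [rw [max_eq_right hr, abs_of_nonneg hr]; rw [max_eq_left hr, abs_of_nonpos hr]] <;>
  exact ⟨fun ⟨⟨_, _⟩, _, _⟩ => ⟨by linarith, by linarith⟩,
    fun ⟨_, _⟩ => ⟨⟨by linarith, by linarith⟩, by linarith, by linarith⟩⟩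

lemma rectSet_inter_rectSet_add_smul {w : V2} (hw : dot2 w w = 1) (c : V2) (l1 l2 r : ℝ) :
    rectSet c w l1 l2 ∩ rectSet (c + r • w) w l1 l2 =
      rectSet (c + max 0 r • w) w (l1 - |r|) l2 := by
  ext x
  simp only [mem_inter_iff, mem_rectSet_iff hw, dot2_sub_add_smul, hw, dot2_perp_right, mul_one,
    mul_zero, sub_zero, ← mem_Icc_and_sub_mem_Icc_iff]
  tauto

def tent (t : ℝ) : ℝ := max (1 - |t|) 0

lemma continuous_tent : Continuous tent := by unfold tent; fun_prop

lemma tent_nonneg (t : ℝ) : 0 ≤ tent t := le_max_right _ _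

lemma mem_Ioo_of_tent_ne_zero {t : ℝ} (h : tent t ≠ 0) : t ∈ Ioo (-1) 1 := by
  have ht : |t| < 1 := by
    by_contra! ht
    exact h (max_eq_right (by linarith))
  exact abs_lt.mp ht

lemma mem_Ioo_of_tent_sub_ne_zero {t s : ℝ} (h : tent (t - s) ≠ 0) : t ∈ Ioo (s - 1) (s + 1) := by
  obtain ⟨h1, h2⟩ := mem_Ioo_of_tent_ne_zero h
  constructor <;> linarith

lemma tent_eq_zero_of_notMem_Icc {t : ℝ} (ht : t ∉ Icc (-1) 1) : tent t = 0 := by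
  by_contra h
  exact ht (Ioo_subset_Icc_self (mem_Ioo_of_tent_ne_zero h))

lemma integrable_tent : Integrable tent :=
  continuous_tent.integrable_of_hasCompactSupport <|
    HasCompactSupport.intro isCompact_Icc fun _ => tent_eq_zero_of_notMem_Icc

lemma integral_tent : ∫ t, tent t = 1 := by
  rw [← setIntegral_eq_integral_of_forall_compl_eq_zero fun _ => tent_eq_zero_of_notMem_Icc,
    integral_Icc_eq_integral_Ioc,
    ← intervalIntegral.integral_of_le (by norm_num),
    ← intervalIntegral.integral_add_adjacent_intervals (b := 0)
      (continuous_tent.intervalIntegrable _ _) (continuous_tent.intervalIntegrable _ _)]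
  have hneg : ∫ t in (-1 : ℝ)..0, tent t = ∫ t in (-1 : ℝ)..0, (1 + t) :=
    intervalIntegral.integral_congr fun t ht => by
      rw [uIcc_of_le (by norm_num), mem_Icc] at ht
      rw [tent, abs_of_nonpos ht.2, max_eq_left (by linarith)]; ring
  have hpos : ∫ t in (0 : ℝ)..1, tent t = ∫ t in (0 : ℝ)..1, (1 - t) :=
    intervalIntegral.integral_congr fun t ht => by
      rw [uIcc_of_le (by norm_num), mem_Icc] at ht
      rw [tent, abs_of_nonneg ht.1, max_eq_left (by linarith)]
  rw [hneg, hpos, intervalIntegral.integral_add intervalIntegrable_const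
    intervalIntegral.intervalIntegrable_id, intervalIntegral.integral_sub intervalIntegrable_const
    intervalIntegral.intervalIntegrable_id]
  norm_num [integral_id]

lemma tendsto_integral_principalValue {f : ℝ → ℝ} {α β : ℝ} (hα : 0 < α)
    (hf : ∀ t, f t ≠ 0 → α ≤ |t| ∧ |t| ≤ β) :
    Tendsto (fun δ => ∫ t in {t | δ < |t| ∧ |t| < δ⁻¹}, f t) (𝓝[>] 0) (𝓝 (∫ t, f t)) := by
  refine tendsto_const_nhds.congr' ?_
  filter_upwards [Ioo_mem_nhdsGT hα, tendsto_inv_nhdsGT_zero.eventually_gt_atTop β]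
    with δ hδ hδβ
  refine (setIntegral_eq_integral_of_forall_compl_eq_zero fun t ht => ?_).symm
  by_contra hft
  obtain ⟨hαt, htβ⟩ := hf t hft
  exact ht ⟨hδ.2.trans_le hαt, htβ.trans_lt hδβ⟩

lemma div_three_le_integral_tent_div {a : ℝ} (ha : 0 ≤ a) :
    a / 3 ≤ ∫ t, tent (t - 2) * a / t := by
  have hsupp : ∀ t, tent (t - 2) ≠ 0 → 1 < t ∧ t < 3 := fun t h => by
    obtain ⟨h1, h3⟩ := mem_Ioo_of_tent_sub_ne_zero h
    constructor <;> linarith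
  have hint : Integrable fun t => tent (t - 2) * a := (integrable_tent.comp_sub_right 2).mul_const a
  have hint_div : Integrable fun t => tent (t - 2) * a / t := by
    refine hint.mono' (hint.aemeasurable.div aemeasurable_id).aestronglyMeasurable
      (Eventually.of_forall fun t => ?_)
    rcases eq_or_ne (tent (t - 2)) 0 with h | h
    · simp [h]
    · rw [norm_div, Real.norm_of_nonneg (mul_nonneg (tent_nonneg _) ha),
        Real.norm_of_nonneg (by linarith [hsupp t h])]
      exact div_le_self (mul_nonneg (tent_nonneg _) ha) (by linarith [hsupp t h])
  calc a / 3 = ∫ t, tent (t - 2) * (a / 3) := by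
        rw [integral_mul_const, integral_sub_right_eq_self tent, integral_tent, one_mul]
    _ ≤ ∫ t, tent (t - 2) * a / t := by
      refine integral_mono (hint.div_const 3 |>.congr ?_) hint_div fun t => ?_
      · exact Eventually.of_forall fun t => by simp only [mul_div_assoc]
      rcases eq_or_ne (tent (t - 2)) 0 with h | h
      · simp [h]
      · rw [← mul_div_assoc]
        exact div_le_div_of_nonneg_left (mul_nonneg (tent_nonneg _) ha)
          (by linarith [hsupp t h]) (hsupp t h).2.le

lemma sliding_integrand_eq {w u c : V2} (hw : dot2 w w = 1) {a : ℝ} {Q : Set V2}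
    (hQ : {y : V2 | ∃ x ∈ rectSet c w 1 a, ∃ t : ℝ, 1 ≤ t ∧ t ≤ 3 ∧ y = x - t • u} ⊆ Q)
    (t : ℝ) (x : V2) :
    (rectSet c w 1 a).indicator (fun _ => (1 : ℝ)) x *
        (((fun y => y - (2 : ℝ) • w) '' rectSet c w 1 a).indicator (fun _ => 1) (x - t • w) *
          Q.indicator (fun _ => 1) (x - t • u)) =
      (rectSet (c + max 0 (t - 2) • w) w (1 - |t - 2|) a).indicator (fun _ => 1) x := by
  have hshift : x - t • w ∈ (fun y => y - (2 : ℝ) • w) '' rectSet c w 1 a ↔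
      x ∈ rectSet (c + (t - 2) • w) w 1 a := by
    rw [image_sub_rectSet, sub_mem_rectSet_iff, show c - (2 : ℝ) • w + t • w = c + (t - 2) • w by
      module]
  have hoverlap := rectSet_inter_rectSet_add_smul hw c 1 a (t - 2)
  by_cases hx : x ∈ rectSet c w 1 a ∩ rectSet (c + (t - 2) • w) w 1 a
  · obtain ⟨ht1, ht3⟩ := abs_le.mp (sub_nonneg.mp (nonneg_of_mem_rectSet (hoverlap ▸ hx)))
    have hQx : x - t • u ∈ Q := hQ ⟨x, hx.1, t, by linarith, by linarith, rfl⟩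
    rw [← hoverlap, indicator_of_mem hx.1, indicator_of_mem (hshift.2 hx.2), indicator_of_mem hQx,
      indicator_of_mem hx, mul_one, mul_one]
  · rw [← hoverlap, indicator_of_notMem hx]
    rcases not_and_or.mp hx with h | h
    · rw [indicator_of_notMem h, zero_mul]
    · rw [indicator_of_notMem (mt hshift.1 h), zero_mul, mul_zero]

theorem sliding_lower_bound_general (w u : V2) (hw : dot2 w w = 1)
    (a : ℝ) (ha0 : 0 < a) (c : V2) (Q : Set V2)
    (hQ : {y : V2 | ∃ x ∈ rectSet c w 1 a, ∃ t : ℝ, 1 ≤ t ∧ t ≤ 3 ∧ y = x - t • u} ⊆ Q) :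
    ∃ L : ℝ,
      Filter.Tendsto
        (fun δ : ℝ => ∫ t in {t : ℝ | δ < |t| ∧ |t| < δ⁻¹},
          (∫ x : V2,
            Set.indicator (rectSet c w 1 a) (fun _ => (1 : ℝ)) x *
              (Set.indicator ((fun y => y - (2 : ℝ) • w) '' rectSet c w 1 a)
                  (fun _ => (1 : ℝ)) (x - t • w) *
                Set.indicator Q (fun _ => (1 : ℝ)) (x - t • u))) / t)
        (𝓝[>] (0 : ℝ)) (𝓝 L) ∧
      a / 3 ≤ L := by
  simp_rw [sliding_integrand_eq hw hQ, integral_indicator_const _ (measurableSet_rectSet _ _ _ _),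
    measureReal_rectSet hw, max_eq_left ha0.le, smul_eq_mul, mul_one, ← tent.eq_1]
  refine ⟨_, tendsto_integral_principalValue (β := 3) one_pos fun t ht => ?_,
    div_three_le_integral_tent_div ha0.le⟩
  obtain ⟨ht1, ht3⟩ := mem_Ioo_of_tent_sub_ne_zero (left_ne_zero_of_mul (div_ne_zero_iff.mp ht).1)
  rw [abs_of_pos (by linarith)]
  constructor <;> linarith

/-- **Sliding lower bound for the principal-value form on rectangle
configurations.**  With `R` a `1 × a` rectangle with long side parallel to the unit
vector `w`, `R′ = R − 2w` its reach, and `Q ⊇ {x − tu : x ∈ R, 1 ≤ t ≤ 3}`, the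
principal-value limit `Λ` of `δ ↦ ∫_{δ<|t|<1/δ} ∫ χ_R(x) χ_{R′}(x−tw) χ_Q(x−tu) dx dt/t`
exists and `Λ ≥ a/3 = |R|/3`. -/
theorem sliding_lower_bound (w u : V2) (hw : dot2 w w = 1)
    (a : ℝ) (ha0 : 0 < a) (ha1 : a ≤ 1) (c : V2) (Q : Set V2)
    (hQmeas : MeasurableSet Q)
    (hQ : {y : V2 | ∃ x ∈ rectSet c w 1 a, ∃ t : ℝ, 1 ≤ t ∧ t ≤ 3 ∧ y = x - t • u} ⊆ Q) :
    ∃ L : ℝ,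
      Filter.Tendsto
        (fun δ : ℝ => ∫ t in {t : ℝ | δ < |t| ∧ |t| < δ⁻¹},
          (∫ x : V2,
            Set.indicator (rectSet c w 1 a) (fun _ => (1 : ℝ)) x *
              (Set.indicator ((fun y => y - (2 : ℝ) • w) '' rectSet c w 1 a)
                  (fun _ => (1 : ℝ)) (x - t • w) *
                Set.indicator Q (fun _ => (1 : ℝ)) (x - t • u))) / t)
        (𝓝[>] (0 : ℝ)) (𝓝 L) ∧
      a / 3 ≤ L :=
  sliding_lower_bound_general w u hw a ha0 c Q hQ
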